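/- arXiv:2202.09724 — 2 statements merged into one kernel-verified Lean document; each statement's English description precedes it below -/
import Mathlib

section
/- Generalized Neyman–Pearson lemma (inequality constraints): Under the setting of the generalized Neyman–Pearson lemma, if additionally cᵢ ≥ 0 for all i = 1,…,m, then f* maximizes ∫ f φ₀ dν over the larger class of all measurable f : 𝒳 → [0,1] satisfying the inequality constraints ∫ f φᵢ dν ≤ tᵢ for all i = 1,…,m. -/
/-!
Weak duality with the multipliers `cᵢ`. Put `d = φ₀ - ∑ cᵢ φᵢ`. The threshold conditions
make `f* d ≥ f d` pointwise for every `f` with values in `[0,1]`, so `∫ f d ≤ ∫ f* d`. Hence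
`∫ f φ₀ = ∫ f d + ∑ cᵢ ∫ f φᵢ ≤ ∫ f* d + ∑ cᵢ tᵢ = ∫ f* φ₀`, where `cᵢ ≥ 0` turns each
constraint `∫ f φᵢ ≤ tᵢ` into `cᵢ ∫ f φᵢ ≤ cᵢ tᵢ`.
-/

open MeasureTheory

section NeymanPearson

variable {X : Type*} [MeasurableSpace X] {ν : Measure X}

theorem MeasureTheory.Integrable.unitInterval_mul {f g : X → ℝ} (hg : Integrable g ν)
    (hf : Measurable f) (hf0 : ∀ x, 0 ≤ f x) (hf1 : ∀ x, f x ≤ 1) :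
    Integrable (fun x => f x * g x) ν :=
  hg.bdd_mul (c := 1) hf.aestronglyMeasurable <| Filter.Eventually.of_forall fun x => by
    rw [Real.norm_eq_abs, abs_le]
    exact ⟨by linarith [hf0 x], hf1 x⟩

theorem mul_le_mul_of_threshold {a b d : ℝ} (hb0 : 0 ≤ b) (hb1 : b ≤ 1)
    (hpos : 0 < d → a = 1) (hneg : d < 0 → a = 0) : b * d ≤ a * d := by
  rcases lt_trichotomy d 0 with hd | rfl | hd
  · rw [hneg hd]; nlinarith
  · simp
  · rw [hpos hd]; nlinarith

theorem integral_mul_sub_sum {m : ℕ} {φ0 : X → ℝ} {φ : Fin m → X → ℝ}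
    (hφ0 : Integrable φ0 ν) (hφ : ∀ i, Integrable (φ i) ν) (c : Fin m → ℝ)
    {f : X → ℝ} (hf : Measurable f) (hf0 : ∀ x, 0 ≤ f x) (hf1 : ∀ x, f x ≤ 1) :
    ∫ x, f x * (φ0 x - ∑ i, c i * φ i x) ∂ν
      = ∫ x, f x * φ0 x ∂ν - ∑ i, c i * ∫ x, f x * φ i x ∂ν := by
  have hfφ : ∀ i, Integrable (fun x => f x * φ i x) ν :=
    fun i => (hφ i).unitInterval_mul hf hf0 hf1
  have hsplit : (fun x => f x * (φ0 x - ∑ i, c i * φ i x))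
      = fun x => f x * φ0 x - ∑ i, c i * (f x * φ i x) := by
    funext x
    rw [mul_sub, Finset.mul_sum]
    congr 1
    exact Finset.sum_congr rfl fun i _ => by ring
  rw [hsplit, integral_sub (hφ0.unitInterval_mul hf hf0 hf1)
      (integrable_finsetSum _ fun i _ => (hfφ i).const_mul _),
    integral_finsetSum _ fun i _ => (hfφ i).const_mul _]
  simp only [integral_const_mul]

end NeymanPearson

theorem stmt_3_general {X : Type*} [MeasurableSpace X] (ν : Measure X)
    (m : ℕ) (φ0 : X → ℝ) (φ : Fin m → X → ℝ)
    (hφ0 : Integrable φ0 ν) (hφ : ∀ i, Integrable (φ i) ν)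
    (c t : Fin m → ℝ) (hc : ∀ i, 0 ≤ c i)
    (fstar : X → ℝ) (hfm : Measurable fstar)
    (hf0 : ∀ x, 0 ≤ fstar x) (hf1 : ∀ x, fstar x ≤ 1)
    (hgt : ∀ x, (∑ i, c i * φ i x) < φ0 x → fstar x = 1)
    (hlt : ∀ x, φ0 x < (∑ i, c i * φ i x) → fstar x = 0)
    (heq : ∀ i, ∫ x, fstar x * φ i x ∂ν = t i) :
    ∀ f : X → ℝ, Measurable f → (∀ x, 0 ≤ f x) → (∀ x, f x ≤ 1) →
      (∀ i, ∫ x, f x * φ i x ∂ν ≤ t i) →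
      ∫ x, f x * φ0 x ∂ν ≤ ∫ x, fstar x * φ0 x ∂ν := by
  intro f hfm' hf0' hf1' hle
  have hd : Integrable (fun x => φ0 x - ∑ i, c i * φ i x) ν :=
    hφ0.sub (integrable_finsetSum _ fun i _ => (hφ i).const_mul _)
  have hlagrange : ∫ x, f x * (φ0 x - ∑ i, c i * φ i x) ∂ν
      ≤ ∫ x, fstar x * (φ0 x - ∑ i, c i * φ i x) ∂ν :=
    integral_mono (hd.unitInterval_mul hfm' hf0' hf1') (hd.unitInterval_mul hfm hf0 hf1) fun x =>
      mul_le_mul_of_threshold (hf0' x) (hf1' x) (fun h => hgt x (sub_pos.mp h))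
        (fun h => hlt x (sub_neg.mp h))
  have hconstraints : ∑ i, c i * ∫ x, f x * φ i x ∂ν ≤ ∑ i, c i * t i :=
    Finset.sum_le_sum fun i _ => mul_le_mul_of_nonneg_left (hle i) (hc i)
  rw [integral_mul_sub_sum hφ0 hφ c hfm' hf0' hf1',
    integral_mul_sub_sum hφ0 hφ c hfm hf0 hf1] at hlagrange
  simp only [heq] at hlagrange
  linarith

theorem stmt_3 {X : Type*} [MeasurableSpace X] (ν : Measure X) [SigmaFinite ν]
    (m : ℕ) (φ0 : X → ℝ) (φ : Fin m → X → ℝ)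
    (hφ0 : Integrable φ0 ν) (hφ : ∀ i, Integrable (φ i) ν)
    (c t : Fin m → ℝ) (hc : ∀ i, 0 ≤ c i)
    (fstar : X → ℝ) (hfm : Measurable fstar)
    (hf0 : ∀ x, 0 ≤ fstar x) (hf1 : ∀ x, fstar x ≤ 1)
    (hgt : ∀ x, (∑ i, c i * φ i x) < φ0 x → fstar x = 1)
    (hlt : ∀ x, φ0 x < (∑ i, c i * φ i x) → fstar x = 0)
    (heq : ∀ i, ∫ x, fstar x * φ i x ∂ν = t i) :
    ∀ f : X → ℝ, Measurable f → (∀ x, 0 ≤ f x) → (∀ x, f x ≤ 1) →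
      (∀ i, ∫ x, f x * φ i x ∂ν ≤ t i) →
      ∫ x, f x * φ0 x ∂ν ≤ ∫ x, fstar x * φ0 x ∂ν :=
  stmt_3_general ν m φ0 φ hφ0 hφ c t hc fstar hfm hf0 hf1 hgt hlt heq
end

section
/- If for each a ∈ {0,1} the random variable η_a(X) under P_{X|A=a} is atomless, then the map t ↦ DDP(f_t), where f_t(x,a) = 1{η_a(x) > 1/2 + (2a−1)t/(2p_a)}, is continuous on ℝ, monotone non-increasing, and attains every value between lim_{t→+∞} DDP(f_t) and lim_{t→−∞} DDP(f_t); in particular, for any δ with |δ| ≤ |DDP(f_0)| and δ·DDP(f_0) ≥ 0, there exists t* with DDP(f_{t*}) = δ. -/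
/-!
Writing `μₐ` for the law of `ηₐ(X)` under `P_{X|A=a}`, the demographic disparity of the
threshold classifier is `DDP(f_t) = F₀(1/2 - t/(2p₀)) - F₁(1/2 + t/(2p₁))` with `Fₐ` the
distribution function of `μₐ`. This is non-increasing in `t`, continuous because the `μₐ` have
no atoms, and the limits of the `Fₐ` at `±∞` give `DDP(f_t) → ∓1` as
`t → ±∞`. So `DDP(f_t)` takes values of both signs, and by the intermediate value theorem every
value between `0` and `DDP(f_0)`.
-/

open MeasureTheory Set Filter Topology ProbabilityTheory

namespace ProbabilityTheory

lemma continuous_cdf (μ : Measure ℝ) [IsProbabilityMeasure μ] [NullSingletonClass μ] :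
    Continuous (cdf μ) := by
  refine continuous_iff_continuousAt.2 fun x => ?_
  rw [(monotone_cdf μ).continuousAt_iff_leftLim_eq_rightLim, StieltjesFunction.rightLim_eq]
  have hjump : ENNReal.ofReal (cdf μ x - Function.leftLim (cdf μ) x) = 0 := by
    rw [← StieltjesFunction.measure_singleton, measure_cdf, measure_singleton]
  have hle := (monotone_cdf μ).leftLim_le (le_refl x)
  linarith [ENNReal.ofReal_eq_zero.1 hjump]

lemma toReal_measure_gt_eq_one_sub_cdf_map {X : Type*} [MeasurableSpace X] (μ : Measure X)
    [IsProbabilityMeasure μ] {f : X → ℝ} (hf : Measurable f) (c : ℝ) :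
    (μ {x | f x > c}).toReal = 1 - cdf (μ.map f) c := by
  have : IsProbabilityMeasure (μ.map f) := Measure.isProbabilityMeasure_map hf.aemeasurable
  rw [cdf_eq_real, ← probReal_compl_eq_one_sub measurableSet_Iic, compl_Iic,
    map_measureReal_apply hf measurableSet_Ioi]
  rfl

end ProbabilityTheory

lemma nullSingletonClass_map_of_measure_eq_zero {X : Type*} [MeasurableSpace X]
    {μ : Measure X} {f : X → ℝ} (hf : Measurable f) (h : ∀ u, μ {x | f x = u} = 0) :
    NullSingletonClass (μ.map f) :=
  ⟨fun u => by rw [Measure.map_apply hf (measurableSet_singleton u)]; exact h u⟩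

lemma mem_uIcc_zero_of_abs_le_of_mul_nonneg {δ x : ℝ} (habs : |δ| ≤ |x|) (hmul : 0 ≤ δ * x) :
    δ ∈ uIcc 0 x := by
  rw [mem_uIcc]
  rcases le_total 0 x with hx | hx
  · rw [abs_of_nonneg hx] at habs
    left; constructor <;> nlinarith [le_abs_self δ, neg_abs_le δ]
  · rw [abs_of_nonpos hx] at habs
    right; constructor <;> nlinarith [le_abs_self δ, neg_abs_le δ]

lemma mem_range_of_mem_uIcc_zero {X : Type*} [TopologicalSpace X] [PreconnectedSpace X]
    {f : X → ℝ} (hf : Continuous f) (hneg : ∃ a, f a ≤ 0) (hpos : ∃ b, 0 ≤ f b) {x : X}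
    {δ : ℝ} (hδ : δ ∈ uIcc 0 (f x)) : δ ∈ range f := by
  obtain ⟨a, ha⟩ := hneg
  obtain ⟨b, hb⟩ := hpos
  rw [mem_uIcc] at hδ
  refine mem_range_of_exists_le_of_exists_ge hf ?_ ?_
  · rcases hδ with ⟨h0, -⟩ | ⟨hx, -⟩
    exacts [⟨a, ha.trans h0⟩, ⟨x, hx⟩]
  · rcases hδ with ⟨-, hx⟩ | ⟨-, h0⟩
    exacts [⟨x, hx⟩, ⟨b, h0.trans hb⟩]

section ThresholdDisparity

variable (μ₀ μ₁ : Measure ℝ) {p₀ p₁ : ℝ}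

/-- `DDP(f_t)` expressed through the laws `μₐ` of the scores `ηₐ(X)`. -/
noncomputable def thresholdDisparity (p₀ p₁ t : ℝ) : ℝ :=
  cdf μ₀ (1 / 2 - t / (2 * p₀)) - cdf μ₁ (1 / 2 + t / (2 * p₁))

lemma continuous_thresholdDisparity [IsProbabilityMeasure μ₀] [IsProbabilityMeasure μ₁]
    [NullSingletonClass μ₀] [NullSingletonClass μ₁] :
    Continuous (thresholdDisparity μ₀ μ₁ p₀ p₁) := by
  unfold thresholdDisparity
  exact ((continuous_cdf μ₀).comp (by fun_prop)).sub ((continuous_cdf μ₁).comp (by fun_prop))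

lemma antitone_thresholdDisparity (hp₀ : 0 < p₀) (hp₁ : 0 < p₁) :
    Antitone (thresholdDisparity μ₀ μ₁ p₀ p₁) := by
  intro s t hst
  have h₀ : 1 / 2 - t / (2 * p₀) ≤ 1 / 2 - s / (2 * p₀) := by gcongr
  have h₁ : 1 / 2 + s / (2 * p₁) ≤ 1 / 2 + t / (2 * p₁) := by gcongr
  exact sub_le_sub (monotone_cdf μ₀ h₀) (monotone_cdf μ₁ h₁)

lemma tendsto_thresholdDisparity_atTop (hp₀ : 0 < p₀) (hp₁ : 0 < p₁) :
    Tendsto (thresholdDisparity μ₀ μ₁ p₀ p₁) atTop (𝓝 (-1)) := by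
  have h₀ : Tendsto (fun t : ℝ => 1 / 2 - t / (2 * p₀)) atTop atBot := by
    simp_rw [sub_eq_add_neg, ← neg_div]
    exact tendsto_atBot_add_const_left _ _
      (tendsto_neg_atTop_atBot.atBot_div_const (by positivity))
  have h₁ : Tendsto (fun t : ℝ => 1 / 2 + t / (2 * p₁)) atTop atTop :=
    tendsto_atTop_add_const_left _ _ (tendsto_id.atTop_div_const (by positivity))
  unfold thresholdDisparity
  simpa using ((tendsto_cdf_atBot μ₀).comp h₀).sub ((tendsto_cdf_atTop μ₁).comp h₁)

lemma tendsto_thresholdDisparity_atBot (hp₀ : 0 < p₀) (hp₁ : 0 < p₁) :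
    Tendsto (thresholdDisparity μ₀ μ₁ p₀ p₁) atBot (𝓝 1) := by
  have h₀ : Tendsto (fun t : ℝ => 1 / 2 - t / (2 * p₀)) atBot atTop := by
    simp_rw [sub_eq_add_neg, ← neg_div]
    exact tendsto_atTop_add_const_left _ _
      (tendsto_neg_atBot_atTop.atTop_div_const (by positivity))
  have h₁ : Tendsto (fun t : ℝ => 1 / 2 + t / (2 * p₁)) atBot atBot :=
    tendsto_atBot_add_const_left _ _ (tendsto_id.atBot_div_const (by positivity))
  unfold thresholdDisparity
  simpa using ((tendsto_cdf_atTop μ₀).comp h₀).sub ((tendsto_cdf_atBot μ₁).comp h₁)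

end ThresholdDisparity

theorem stmt_17_general {X : Type*} [MeasurableSpace X]
    (ν : Bool → Measure X) [∀ a, IsProbabilityMeasure (ν a)]
    (η : Bool → X → ℝ) (hη : ∀ a, Measurable (η a))
    (p : Bool → ℝ) (hp : ∀ a, 0 < p a)
    (hatomless : ∀ (a : Bool) (u : ℝ), ν a {x | η a x = u} = 0)
    (D : ℝ → ℝ)
    (hD : ∀ t, D t = (ν true {x | η true x > 1/2 + t / (2 * p true)}).toReal -
      (ν false {x | η false x > 1/2 - t / (2 * p false)}).toReal) :
    Continuous D ∧ Antitone D ∧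
      ∀ δ : ℝ, |δ| ≤ |D 0| → 0 ≤ δ * D 0 → ∃ tstar : ℝ, D tstar = δ := by
  have hlaw_prob a : IsProbabilityMeasure ((ν a).map (η a)) :=
    Measure.isProbabilityMeasure_map (hη a).aemeasurable
  have hlaw_atomless a : NullSingletonClass ((ν a).map (η a)) :=
    nullSingletonClass_map_of_measure_eq_zero (hη a) (hatomless a)
  have hD' : D = thresholdDisparity ((ν false).map (η false)) ((ν true).map (η true))
      (p false) (p true) := by
    funext t
    rw [hD, thresholdDisparity, toReal_measure_gt_eq_one_sub_cdf_map _ (hη true),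
      toReal_measure_gt_eq_one_sub_cdf_map _ (hη false)]
    ring
  subst hD'
  set μ₀ := (ν false).map (η false)
  set μ₁ := (ν true).map (η true)
  refine ⟨continuous_thresholdDisparity μ₀ μ₁,
    antitone_thresholdDisparity μ₀ μ₁ (hp _) (hp _), fun δ habs hmul => ?_⟩
  obtain ⟨a, ha⟩ := ((tendsto_thresholdDisparity_atTop μ₀ μ₁ (hp _) (hp _)).eventually
    (gt_mem_nhds (show (-1 : ℝ) < 0 by norm_num))).exists
  obtain ⟨b, hb⟩ := ((tendsto_thresholdDisparity_atBot μ₀ μ₁ (hp _) (hp _)).eventually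
    (lt_mem_nhds zero_lt_one)).exists
  exact mem_range_of_mem_uIcc_zero (continuous_thresholdDisparity μ₀ μ₁)
    ⟨a, ha.le⟩ ⟨b, hb.le⟩ (mem_uIcc_zero_of_abs_le_of_mul_nonneg habs hmul)

theorem stmt_17 {X : Type*} [MeasurableSpace X]
    (ν : Bool → Measure X) [∀ a, IsProbabilityMeasure (ν a)]
    (η : Bool → X → ℝ) (hη : ∀ a, Measurable (η a))
    (hη0 : ∀ a x, 0 ≤ η a x) (hη1 : ∀ a x, η a x ≤ 1)
    (p : Bool → ℝ) (hp : ∀ a, 0 < p a)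
    (hatomless : ∀ (a : Bool) (u : ℝ), ν a {x | η a x = u} = 0)
    (D : ℝ → ℝ)
    (hD : ∀ t, D t = (ν true {x | η true x > 1/2 + t / (2 * p true)}).toReal -
      (ν false {x | η false x > 1/2 - t / (2 * p false)}).toReal) :
    Continuous D ∧ Antitone D ∧
      ∀ δ : ℝ, |δ| ≤ |D 0| → 0 ≤ δ * D 0 → ∃ tstar : ℝ, D tstar = δ :=
  stmt_17_general ν η hη p hp hatomless D hD
end
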